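/- For any non-degenerate Euclidean tetrahedron with edge lengths e_{ij}, Cayley–Menger determinant D > 0, and cofactors D_{ij}, the interior dihedral angle α_{ij} at edge e_{ij} satisfies cos(α_{ij}) = D_{ij}/√(2·e_{ij}²·D + D_{ij}²). -/

import Mathlib

/-!
Put `u = v₂ - v₁`, `a = v₃ - v₁`, `b = v₄ - v₁`. Expanding the squared edge lengths in these
vectors shows that the Cayley–Menger determinant is `8 G(u, a, b)` and the cofactor is
`4 P` with `P = ⟪u, u⟫⟪a, b⟫ - ⟪u, a⟫⟪u, b⟫`, where `G` denotes Gram determinants. The dihedral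
angle is the angle between the components of `a` and `b` orthogonal to `u`, whose cosine is
`P / √(G(u, a) G(u, b))`. Finally the Desnanot–Jacobi identity
`⟪u, u⟫ G(u, a, b) = G(u, a) G(u, b) - P²` turns `2 e₁₂² D + D₁₂²` into `16 G(u, a) G(u, b)`.
-/

open Real

/-- The interior dihedral angle of a tetrahedron along the edge `pq`, between the faces
`pqa` and `pqb`. -/
noncomputable def dihedralAngle (p q a b : EuclideanSpace ℝ (Fin 3)) : ℝ :=
  InnerProductGeometry.angle
    (a - p - ((inner ℝ (a - p) (q - p) : ℝ) / (inner ℝ (q - p) (q - p) : ℝ)) • (q - p))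
    (b - p - ((inner ℝ (b - p) (q - p) : ℝ) / (inner ℝ (q - p) (q - p) : ℝ)) • (q - p))

open InnerProductGeometry Matrix RealInnerProductSpace

def cayleyMengerMatrix {P : Type*} [MetricSpace P] (v₁ v₂ v₃ v₄ : P) :
    Matrix (Fin 5) (Fin 5) ℝ :=
  !![0, dist v₁ v₂ ^ 2, dist v₁ v₃ ^ 2, dist v₁ v₄ ^ 2, 1;
     dist v₁ v₂ ^ 2, 0, dist v₂ v₃ ^ 2, dist v₂ v₄ ^ 2, 1;
     dist v₁ v₃ ^ 2, dist v₂ v₃ ^ 2, 0, dist v₃ v₄ ^ 2, 1;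
     dist v₁ v₄ ^ 2, dist v₂ v₄ ^ 2, dist v₃ v₄ ^ 2, 0, 1;
     1, 1, 1, 1, 0]

theorem det_cayleyMenger_eq_eight_mul_det (uu aa bb ua ub ab : ℝ) :
    !![0, uu, aa, bb, 1;
       uu, 0, uu - 2 * ua + aa, uu - 2 * ub + bb, 1;
       aa, uu - 2 * ua + aa, 0, aa - 2 * ab + bb, 1;
       bb, uu - 2 * ub + bb, aa - 2 * ab + bb, 0, 1;
       1, 1, 1, 1, 0].det = 8 * !![uu, ua, ub; ua, aa, ab; ub, ab, bb].det := by
  simp [det_succ_row_zero, Fin.sum_univ_succ, Fin.succAbove]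
  ring

theorem neg_det_cayleyMenger_submatrix (uu aa bb ua ub ab : ℝ) :
    -(!![0, uu, aa, bb, 1;
         uu, 0, uu - 2 * ua + aa, uu - 2 * ub + bb, 1;
         aa, uu - 2 * ua + aa, 0, aa - 2 * ab + bb, 1;
         bb, uu - 2 * ub + bb, aa - 2 * ab + bb, 0, 1;
         1, 1, 1, 1, 0].submatrix ![0, 1, 3, 4] ![0, 1, 2, 4]).det =
      4 * (uu * ab - ua * ub) := by
  simp [det_succ_row_zero, Fin.sum_univ_succ, Fin.succAbove, submatrix]
  ring

section InnerProductSpace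

variable {E : Type*} [NormedAddCommGroup E] [InnerProductSpace ℝ E]

theorem dist_sq_eq_inner (o p q : E) :
    dist p q ^ 2 = ⟪p - o, p - o⟫ - 2 * ⟪p - o, q - o⟫ + ⟪q - o, q - o⟫ := by
  rw [dist_eq_norm, ← sub_sub_sub_cancel_right p q o, ← real_inner_self_eq_norm_sq,
    inner_sub_sub_self, real_inner_comm (p - o) (q - o)]
  ring

theorem cayleyMengerMatrix_eq_inner (v₁ v₂ v₃ v₄ : E) :
    let u := v₂ - v₁; let a := v₃ - v₁; let b := v₄ - v₁
    cayleyMengerMatrix v₁ v₂ v₃ v₄ =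
      !![0, ⟪u, u⟫, ⟪a, a⟫, ⟪b, b⟫, 1;
         ⟪u, u⟫, 0, ⟪u, u⟫ - 2 * ⟪u, a⟫ + ⟪a, a⟫, ⟪u, u⟫ - 2 * ⟪u, b⟫ + ⟪b, b⟫, 1;
         ⟪a, a⟫, ⟪u, u⟫ - 2 * ⟪u, a⟫ + ⟪a, a⟫, 0, ⟪a, a⟫ - 2 * ⟪a, b⟫ + ⟪b, b⟫, 1;
         ⟪b, b⟫, ⟪u, u⟫ - 2 * ⟪u, b⟫ + ⟪b, b⟫, ⟪a, a⟫ - 2 * ⟪a, b⟫ + ⟪b, b⟫, 0, 1;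
         1, 1, 1, 1, 0] := by
  simp only [cayleyMengerMatrix, dist_sq_eq_inner v₁, sub_self, inner_zero_left, mul_zero,
    zero_add]

theorem gram_fin_two (u a : E) : gram ℝ ![u, a] = !![⟪u, u⟫, ⟪u, a⟫; ⟪u, a⟫, ⟪a, a⟫] := by
  ext i j
  fin_cases i <;> fin_cases j <;> simp [gram_apply, real_inner_comm]

theorem gram_fin_three (u a b : E) :
    gram ℝ ![u, a, b] =
      !![⟪u, u⟫, ⟪u, a⟫, ⟪u, b⟫; ⟪u, a⟫, ⟪a, a⟫, ⟪a, b⟫; ⟪u, b⟫, ⟪a, b⟫, ⟪b, b⟫] := by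
  ext i j
  fin_cases i <;> fin_cases j <;> simp [gram_apply, real_inner_comm]

theorem det_cayleyMengerMatrix_eq_eight_mul_det_gram (v₁ v₂ v₃ v₄ : E) :
    (cayleyMengerMatrix v₁ v₂ v₃ v₄).det = 8 * (gram ℝ ![v₂ - v₁, v₃ - v₁, v₄ - v₁]).det := by
  rw [cayleyMengerMatrix_eq_inner, det_cayleyMenger_eq_eight_mul_det, gram_fin_three]

theorem neg_det_cayleyMengerMatrix_submatrix (v₁ v₂ v₃ v₄ : E) :
    -((cayleyMengerMatrix v₁ v₂ v₃ v₄).submatrix ![0, 1, 3, 4] ![0, 1, 2, 4]).det =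
      4 * (⟪v₂ - v₁, v₂ - v₁⟫ * ⟪v₃ - v₁, v₄ - v₁⟫ - ⟪v₂ - v₁, v₃ - v₁⟫ * ⟪v₂ - v₁, v₄ - v₁⟫) := by
  rw [cayleyMengerMatrix_eq_inner, neg_det_cayleyMenger_submatrix]

theorem inner_self_mul_det_gram_eq (u a b : E) :
    ⟪u, u⟫ * (gram ℝ ![u, a, b]).det =
      (gram ℝ ![u, a]).det * (gram ℝ ![u, b]).det - (⟪u, u⟫ * ⟪a, b⟫ - ⟪u, a⟫ * ⟪u, b⟫) ^ 2 := by
  simp [gram_fin_two, gram_fin_three, det_fin_two_of, det_fin_three]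
  ring

theorem inner_sub_proj_sub_proj {u : E} (hu : u ≠ 0) (a b : E) :
    ⟪a - (⟪a, u⟫ / ⟪u, u⟫) • u, b - (⟪b, u⟫ / ⟪u, u⟫) • u⟫ =
      (⟪u, u⟫ * ⟪a, b⟫ - ⟪u, a⟫ * ⟪u, b⟫) / ⟪u, u⟫ := by
  have : ⟪u, u⟫ ≠ 0 := inner_self_ne_zero.2 hu
  simp only [inner_sub_left, inner_sub_right, real_inner_smul_left, real_inner_smul_right,
    real_inner_comm u]
  field_simp
  ring

theorem cos_angle_sub_proj {u : E} (hu : u ≠ 0) (a b : E) :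
    cos (angle (a - (⟪a, u⟫ / ⟪u, u⟫) • u) (b - (⟪b, u⟫ / ⟪u, u⟫) • u)) =
      (⟪u, u⟫ * ⟪a, b⟫ - ⟪u, a⟫ * ⟪u, b⟫) /
        (√(gram ℝ ![u, a]).det * √(gram ℝ ![u, b]).det) := by
  have hu' : 0 < ⟪u, u⟫ := real_inner_self_pos.2 hu
  have norm_sub_proj (c : E) :
      ‖c - (⟪c, u⟫ / ⟪u, u⟫) • u‖ = √(gram ℝ ![u, c]).det / √⟪u, u⟫ := by
    rw [norm_eq_sqrt_real_inner, inner_sub_proj_sub_proj hu, gram_fin_two, det_fin_two_of,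
      sqrt_div' _ hu'.le]
  rw [cos_angle, inner_sub_proj_sub_proj hu, norm_sub_proj, norm_sub_proj, div_mul_div_comm,
    mul_self_sqrt hu'.le, div_div_div_cancel_right₀ hu'.ne']

end InnerProductSpace

/-- The dihedral angle formula via the Cayley–Menger determinant `D` and the cofactor
`D₁₂`:  `cos α₁₂ = D₁₂ / √(2·e₁₂²·D + D₁₂²)` for a non-degenerate tetrahedron. -/
theorem cos_dihedral_eq_cayleyMenger (v₁ v₂ v₃ v₄ : EuclideanSpace ℝ (Fin 3))
    (hnd : AffineIndependent ℝ ![v₁, v₂, v₃, v₄]) :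
    let CM : Matrix (Fin 5) (Fin 5) ℝ :=
      !![0, dist v₁ v₂ ^ 2, dist v₁ v₃ ^ 2, dist v₁ v₄ ^ 2, 1;
         dist v₁ v₂ ^ 2, 0, dist v₂ v₃ ^ 2, dist v₂ v₄ ^ 2, 1;
         dist v₁ v₃ ^ 2, dist v₂ v₃ ^ 2, 0, dist v₃ v₄ ^ 2, 1;
         dist v₁ v₄ ^ 2, dist v₂ v₄ ^ 2, dist v₃ v₄ ^ 2, 0, 1;
         1, 1, 1, 1, 0]
    let D : ℝ := CM.det
    let D₁₂ : ℝ := -(CM.submatrix ![0, 1, 3, 4] ![0, 1, 2, 4]).det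
    Real.cos (dihedralAngle v₁ v₂ v₃ v₄) =
      D₁₂ / Real.sqrt (2 * dist v₁ v₂ ^ 2 * D + D₁₂ ^ 2) := by
  intro CM D D₁₂
  have hu : v₂ - v₁ ≠ 0 := sub_ne_zero.2 (hnd.injective.ne (by decide : (1 : Fin 4) ≠ 0))
  have hD : D = 8 * (gram ℝ ![v₂ - v₁, v₃ - v₁, v₄ - v₁]).det :=
    det_cayleyMengerMatrix_eq_eight_mul_det_gram v₁ v₂ v₃ v₄
  have hD₁₂ : D₁₂ = 4 * _ := neg_det_cayleyMengerMatrix_submatrix v₁ v₂ v₃ v₄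
  have he : dist v₁ v₂ ^ 2 = ⟪v₂ - v₁, v₂ - v₁⟫ := by
    rw [dist_comm, dist_eq_norm, real_inner_self_eq_norm_sq]
  rw [dihedralAngle, cos_angle_sub_proj hu, hD₁₂, hD, he]
  set u := v₂ - v₁
  set a := v₃ - v₁
  set b := v₄ - v₁
  have hsqrt : √(2 * ⟪u, u⟫ * (8 * (gram ℝ ![u, a, b]).det) +
      (4 * (⟪u, u⟫ * ⟪a, b⟫ - ⟪u, a⟫ * ⟪u, b⟫)) ^ 2) =
        4 * (√(gram ℝ ![u, a]).det * √(gram ℝ ![u, b]).det) := by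
    rw [← sqrt_mul (posSemidef_gram ℝ _).det_nonneg, ← sqrt_sq zero_le_four,
      ← sqrt_mul (sq_nonneg _)]
    congr 1
    linear_combination 16 * inner_self_mul_det_gram_eq u a b
  rw [hsqrt, mul_div_mul_left _ _ four_ne_zero]
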